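/- arXiv:2601.08575 — 2 statements merged into one kernel-verified Lean document; each statement's English description precedes it below -/
import Mathlib

section
/- Let q̃ : ℝ → ℝ be nonnegative measurable with M := sup_{x ≥ 0} ∫_x^{x+1} q̃(s) ds < ∞, and define Q(ξ,η) = (1/4)∫_ξ^η q̃(γ) dγ and the operator (Kv)(ξ,η) = (1/4)∫_0^ξ dξ₁ ∫_ξ^η dη₁ q̃(η₁-ξ₁) v(ξ₁,η₁) acting on continuous functions on {0 ≤ ξ ≤ η}. Then for every n ≥ 0 and 0 ≤ ξ ≤ η, |K^n Q(ξ,η)| ≤ (M^{n+1}/4^{n+1}) · (ξ^n/n!) · ((η+n+1)^{n+1}/(n+1)!). -/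
open MeasureTheory intervalIntegral


/-- Short-piece bound: on an interval of length ≤ 1. -/
lemma short_piece (q : ℝ → ℝ)
    (hloc : ∀ a b : ℝ, IntervalIntegrable q volume a b)
    (hpos : ∀ x, 0 ≤ x → 0 ≤ q x)
    (M : ℝ) (hM0 : 0 ≤ M)
    (hM' : ∀ x : ℝ, 0 ≤ x → (∫ s in x..(x + 1), q s) ≤ M)
    (f : ℝ → ℝ) (hfm : Monotone f) (hf0 : ∀ x, 0 ≤ f x) (hfc : Continuous f)
    (a b : ℝ) (ha : 0 ≤ a) (hab : a ≤ b) (hb1 : b ≤ a + 1) :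
    (∫ t in a..b, q t * f t) ≤ M * ∫ t in b..(b + 1), f t := by
  have h1 : (∫ t in a..b, q t * f t) ≤ ∫ t in a..b, q t * f b :=
    integral_mono_on hab ((hloc a b).mul_continuousOn hfc.continuousOn)
      ((hloc a b).mul_const _)
      (fun x hx => mul_le_mul_of_nonneg_left (hfm hx.2) (hpos x (ha.trans hx.1)))
  have h2 : (∫ t in a..b, q t * f b) = (∫ t in a..b, q t) * f b := by
    simpa using integral_mul_const (f b) q (a := a) (b := b)
  have h3 : (∫ t in a..b, q t) ≤ M := by
    refine le_trans ?_ (hM' a ha)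
    refine integral_mono_interval le_rfl hab hb1 ?_ (hloc a (a + 1))
    exact ae_restrict_of_forall_mem measurableSet_Ioc
      (fun x hx => hpos x (ha.trans hx.1.le))
  have h4 : (∫ t in a..b, q t) * f b ≤ M * f b :=
    mul_le_mul_of_nonneg_right h3 (hf0 b)
  have h5 : f b ≤ ∫ t in b..(b + 1), f t := by
    have := integral_mono_on (f := fun _ => f b) (g := f) (by linarith : b ≤ b + 1)
      (intervalIntegrable_const) (hfc.intervalIntegrable (μ := volume) _ _)
      (fun x hx => hfm hx.1)
    simpa using this
  calc (∫ t in a..b, q t * f t) ≤ M * f b := by linarith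
    _ ≤ M * ∫ t in b..(b + 1), f t := mul_le_mul_of_nonneg_left h5 hM0

/-- Key chopping lemma. -/
lemma key_bound (q : ℝ → ℝ)
    (hloc : ∀ a b : ℝ, IntervalIntegrable q volume a b)
    (hpos : ∀ x, 0 ≤ x → 0 ≤ q x)
    (M : ℝ) (hM0 : 0 ≤ M)
    (hM' : ∀ x : ℝ, 0 ≤ x → (∫ s in x..(x + 1), q s) ≤ M)
    (f : ℝ → ℝ) (hfm : Monotone f) (hf0 : ∀ x, 0 ≤ f x) (hfc : Continuous f)
    (a b : ℝ) (ha : 0 ≤ a) (hab : a ≤ b) :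
    (∫ t in a..b, q t * f t) ≤ M * ∫ t in a..(b + 1), f t := by
  obtain ⟨n, hn⟩ : ∃ n : ℕ, b ≤ a + n := ⟨⌈b - a⌉₊, by linarith [Nat.le_ceil (b - a)]⟩
  induction n generalizing b with
  | zero =>
    have hba : b = a := le_antisymm (by simpa using hn) hab
    subst hba
    simp only [intervalIntegral.integral_same]
    exact mul_nonneg hM0 (intervalIntegral.integral_nonneg (by linarith) (fun x _ => hf0 x))
  | succ n ih =>
    have hsplitf : (∫ t in a..b, f t) + ∫ t in b..(b + 1), f t = ∫ t in a..(b + 1), f t :=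
      integral_add_adjacent_intervals (hfc.intervalIntegrable _ _) (hfc.intervalIntegrable _ _)
    have hfab : 0 ≤ ∫ t in a..b, f t :=
      intervalIntegral.integral_nonneg hab (fun x _ => hf0 x)
    by_cases hb1 : b ≤ a + 1
    · have := short_piece q hloc hpos M hM0 hM' f hfm hf0 hfc a b ha hab hb1
      nlinarith [mul_le_mul_of_nonneg_left hfab hM0]
    · push_neg at hb1
      have hsplit : (∫ t in a..(b-1), q t * f t) + ∫ t in (b-1)..b, q t * f t
          = ∫ t in a..b, q t * f t :=
        integral_add_adjacent_intervals
          ((hloc a (b-1)).mul_continuousOn hfc.continuousOn)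
          ((hloc (b-1) b).mul_continuousOn hfc.continuousOn)
      have h1 := ih (b - 1) (by linarith) (by push_cast at hn ⊢; linarith)
      rw [sub_add_cancel] at h1
      have h2 := short_piece q hloc hpos M hM0 hM' f hfm hf0 hfc (b-1) b
        (by linarith) (by linarith) (by linarith)
      rw [← hsplitf, mul_add]
      linarith

lemma pow_weight_bound (q : ℝ → ℝ)
    (hloc : ∀ a b : ℝ, IntervalIntegrable q volume a b)
    (hpos : ∀ x, 0 ≤ x → 0 ≤ q x)
    (M : ℝ) (hM0 : 0 ≤ M)
    (hM' : ∀ x : ℝ, 0 ≤ x → (∫ s in x..(x + 1), q s) ≤ M)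
    (n : ℕ) (ξ₁ ξ η : ℝ) (h0 : 0 ≤ ξ₁) (h1 : ξ₁ ≤ ξ) (hξη : ξ ≤ η) :
    (∫ s in ξ..η, q (s - ξ₁) * (s + (n:ℝ) + 1) ^ (n+1))
      ≤ M * (η + (n:ℝ) + 2) ^ (n+2) / ((n:ℝ) + 2) := by
  have hξ : (0:ℝ) ≤ ξ := h0.trans h1
  set f : ℝ → ℝ := fun t => (max (t + ξ₁ + ((n:ℝ) + 1)) 0) ^ (n+1) with hf
  have hfm : Monotone f := fun x y hxy =>
    pow_le_pow_left₀ (le_max_right _ _) (max_le_max (by linarith) le_rfl) _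
  have hf0 : ∀ x, 0 ≤ f x := fun x => pow_nonneg (le_max_right _ _) _
  have hfc : Continuous f := by
    rw [hf]; fun_prop
  have e1 : (∫ s in ξ..η, q (s - ξ₁) * (s + (n:ℝ) + 1) ^ (n+1))
      = ∫ s in ξ..η, (fun t => q t * f t) (s - ξ₁) := by
    apply intervalIntegral.integral_congr
    intro x hx
    rw [Set.uIcc_of_le hξη] at hx
    simp only [hf]
    rw [max_eq_left (by linarith [hx.1] : (0:ℝ) ≤ x - ξ₁ + ξ₁ + ((n:ℝ) + 1))]
    have : x - ξ₁ + ξ₁ + ((n:ℝ) + 1) = x + (n:ℝ) + 1 := by ring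
    rw [this]
  rw [e1, intervalIntegral.integral_comp_sub_right (fun t => q t * f t) ξ₁]
  have e2 := key_bound q hloc hpos M hM0 hM' f hfm hf0 hfc (ξ - ξ₁) (η - ξ₁)
    (by linarith) (by linarith)
  refine le_trans e2 ?_
  have e3 : (∫ t in (ξ - ξ₁)..(η - ξ₁ + 1), f t)
      = ∫ s in (ξ - ξ₁ + ξ₁)..(η - ξ₁ + 1 + ξ₁), (max (s + ((n:ℝ) + 1)) 0) ^ (n+1) :=
    intervalIntegral.integral_comp_add_right (fun s => (max (s + ((n:ℝ) + 1)) 0) ^ (n+1)) ξ₁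
  rw [e3]
  have hc1 : ξ - ξ₁ + ξ₁ = ξ := by ring
  have hc2 : η - ξ₁ + 1 + ξ₁ = η + 1 := by ring
  rw [hc1, hc2]
  have e4 : (∫ s in ξ..(η + 1), (max (s + ((n:ℝ) + 1)) 0) ^ (n+1))
      = ∫ s in ξ..(η + 1), (fun u => u ^ (n+1)) (s + ((n:ℝ) + 1)) := by
    apply intervalIntegral.integral_congr
    intro x hx
    rw [Set.uIcc_of_le (by linarith : ξ ≤ η + 1)] at hx
    simp only []
    rw [max_eq_left (by linarith [hx.1] : (0:ℝ) ≤ x + ((n:ℝ) + 1))]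
  rw [e4, intervalIntegral.integral_comp_add_right (fun u => u ^ (n+1)) ((n:ℝ) + 1),
    integral_pow]
  have h5 : (0:ℝ) ≤ (ξ + ((n:ℝ) + 1)) ^ (n + 1 + 1) := by positivity
  have h6 : η + 1 + ((n:ℝ) + 1) = η + (n:ℝ) + 2 := by ring
  rw [h6]
  push_cast
  have hden : ((n:ℝ) + 1 + 1 : ℝ) = (n:ℝ) + 2 := by ring
  rw [hden, mul_div_assoc]
  have hexp : n + 1 + 1 = n + 2 := rfl
  rw [hexp] at h5 ⊢
  refine mul_le_mul_of_nonneg_left ?_ hM0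
  gcongr
  linarith [h5]


/-- The Volterra-type integral operator from the Goursat problem. -/
noncomputable def Kop (q : ℝ → ℝ) (v : ℝ → ℝ → ℝ) : ℝ → ℝ → ℝ :=
  fun ξ η => (1 / 4) * ∫ ξ₁ in (0:ℝ)..ξ, ∫ η₁ in ξ..η, q (η₁ - ξ₁) * v ξ₁ η₁

/-- The inhomogeneity Q(ξ,η) = (1/4)∫_ξ^η q̃(γ) dγ. -/
noncomputable def Qfun (q : ℝ → ℝ) : ℝ → ℝ → ℝ :=
  fun ξ η => (1 / 4) * ∫ γ in ξ..η, q γ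

theorem iterated_kernel_estimate
    (q : ℝ → ℝ) (hq : Measurable q)
    (hpos : ∀ x, 0 ≤ x → 0 ≤ q x)
    (hloc : ∀ a b : ℝ, IntervalIntegrable q volume a b)
    (M : ℝ)
    (hM : IsLUB {y : ℝ | ∃ x : ℝ, 0 ≤ x ∧ y = ∫ s in x..(x + 1), q s} M)
    (n : ℕ) (ξ η : ℝ) (hξ : 0 ≤ ξ) (hξη : ξ ≤ η) :
    |(Kop q)^[n] (Qfun q) ξ η| ≤
      M ^ (n + 1) / 4 ^ (n + 1) * (ξ ^ n / n.factorial) *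
        ((η + n + 1) ^ (n + 1) / (n + 1).factorial) := by
  have hM' : ∀ x : ℝ, 0 ≤ x → (∫ s in x..(x + 1), q s) ≤ M := fun x hx => hM.1 ⟨x, hx, rfl⟩
  have hM0 : 0 ≤ M := by
    have hnn : 0 ≤ ∫ s in (0:ℝ)..(0 + 1), q s :=
      intervalIntegral.integral_nonneg (by norm_num) (fun u hu => hpos u hu.1)
    linarith [hM' 0 le_rfl]
  clear hM hq
  induction n generalizing ξ η with
  | zero =>
    simp only [Function.iterate_zero_apply, Qfun]
    have hqnn : 0 ≤ ∫ γ in ξ..η, q γ :=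
      intervalIntegral.integral_nonneg hξη (fun u hu => hpos u (hξ.trans hu.1))
    have hb := key_bound q hloc hpos M hM0 hM' (fun _ => 1) monotone_const
      (fun _ => zero_le_one) continuous_const ξ η hξ hξη
    simp only [mul_one, intervalIntegral.integral_const, smul_eq_mul] at hb
    rw [abs_of_nonneg (mul_nonneg (by norm_num) hqnn)]
    norm_num [Nat.factorial]
    nlinarith [mul_nonneg hM0 hξ]
  | succ n ih =>
    rw [Function.iterate_succ_apply']
    set v : ℝ → ℝ → ℝ := (Kop q)^[n] (Qfun q) with hv
    set c : ℝ := M ^ (n + 1) / 4 ^ (n + 1) with hc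
    have hc0 : 0 ≤ c := by rw [hc]; positivity
    set D : ℝ := M * (η + (n:ℝ) + 2) ^ (n + 2) / ((n:ℝ) + 2) with hD
    -- Step A: pointwise bound on the inner integral
    have hA : ∀ ξ₁ : ℝ, 0 ≤ ξ₁ → ξ₁ ≤ ξ →
        |∫ η₁ in ξ..η, q (η₁ - ξ₁) * v ξ₁ η₁|
          ≤ c * ξ₁ ^ n / n.factorial / (n + 1).factorial * D := by
      intro ξ₁ h0 h1
      set B : ℝ → ℝ := fun η₁ =>
        c * (ξ₁ ^ n / n.factorial) * ((η₁ + (n:ℝ) + 1) ^ (n + 1) / (n + 1).factorial) with hB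
      have hBc : Continuous B := by rw [hB]; fun_prop
      have hq1 : IntervalIntegrable (fun x => q (x - ξ₁)) volume ξ η := by
        have := (hloc (ξ - ξ₁) (η - ξ₁)).comp_sub_right ξ₁
        simpa using this
      have hint : IntervalIntegrable (fun η₁ => q (η₁ - ξ₁) * B η₁) volume ξ η :=
        hq1.mul_continuousOn hBc.continuousOn
      have step1 : |∫ η₁ in ξ..η, q (η₁ - ξ₁) * v ξ₁ η₁|
          ≤ ∫ η₁ in ξ..η, |q (η₁ - ξ₁) * v ξ₁ η₁| := by
        have := intervalIntegral.norm_integral_le_integral_norm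
          (f := fun η₁ => q (η₁ - ξ₁) * v ξ₁ η₁) (μ := volume) hξη
        simp only [Real.norm_eq_abs] at this
        exact this
      have step2 : (∫ η₁ in ξ..η, |q (η₁ - ξ₁) * v ξ₁ η₁|)
          ≤ ∫ η₁ in ξ..η, q (η₁ - ξ₁) * B η₁ := by
        rw [intervalIntegral.integral_of_le hξη, intervalIntegral.integral_of_le hξη]
        refine integral_mono_of_nonneg
          (Filter.Eventually.of_forall fun x => abs_nonneg _) hint.1 ?_
        refine ae_restrict_of_forall_mem measurableSet_Ioc ?_
        intro x hx
        have hq0 : 0 ≤ q (x - ξ₁) := hpos _ (by linarith [hx.1, hx.2])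
        show |q (x - ξ₁) * v ξ₁ x| ≤ q (x - ξ₁) * B x
        rw [abs_mul, abs_of_nonneg hq0]
        exact mul_le_mul_of_nonneg_left (ih ξ₁ x h0 (by linarith [hx.1])) hq0
      have step3 : (∫ η₁ in ξ..η, q (η₁ - ξ₁) * B η₁)
          = (c * ξ₁ ^ n / n.factorial / (n + 1).factorial) *
              ∫ η₁ in ξ..η, q (η₁ - ξ₁) * (η₁ + (n:ℝ) + 1) ^ (n + 1) := by
        rw [← intervalIntegral.integral_const_mul]
        apply intervalIntegral.integral_congr
        intro x _
        simp only [hB]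
        ring
      have hk0 : 0 ≤ c * ξ₁ ^ n / (n.factorial:ℝ) / ((n + 1).factorial:ℝ) := by
        have : (0:ℝ) ≤ c * ξ₁ ^ n := mul_nonneg hc0 (pow_nonneg h0 _)
        positivity
      have step4 := pow_weight_bound q hloc hpos M hM0 hM' n ξ₁ ξ η h0 h1 hξη
      calc |∫ η₁ in ξ..η, q (η₁ - ξ₁) * v ξ₁ η₁|
          ≤ ∫ η₁ in ξ..η, q (η₁ - ξ₁) * B η₁ := le_trans step1 step2
        _ = (c * ξ₁ ^ n / n.factorial / (n + 1).factorial) *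
              ∫ η₁ in ξ..η, q (η₁ - ξ₁) * (η₁ + (n:ℝ) + 1) ^ (n + 1) := step3
        _ ≤ (c * ξ₁ ^ n / n.factorial / (n + 1).factorial) * D :=
            mul_le_mul_of_nonneg_left step4 hk0
        _ = c * ξ₁ ^ n / n.factorial / (n + 1).factorial * D := rfl
    -- Step B: bound the outer integral
    have hgc : Continuous (fun ξ₁ : ℝ =>
        c * ξ₁ ^ n / n.factorial / (n + 1).factorial * D) := by fun_prop
    have houter : |∫ ξ₁ in (0:ℝ)..ξ, ∫ η₁ in ξ..η, q (η₁ - ξ₁) * v ξ₁ η₁|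
        ≤ ∫ ξ₁ in (0:ℝ)..ξ, c * ξ₁ ^ n / n.factorial / (n + 1).factorial * D := by
      have hnorm := intervalIntegral.norm_integral_le_integral_norm
        (f := fun ξ₁ => ∫ η₁ in ξ..η, q (η₁ - ξ₁) * v ξ₁ η₁) (μ := volume) hξ
      simp only [Real.norm_eq_abs] at hnorm
      refine le_trans hnorm ?_
      · rw [intervalIntegral.integral_of_le hξ, intervalIntegral.integral_of_le hξ]
        refine integral_mono_of_nonneg
          (Filter.Eventually.of_forall fun x => abs_nonneg _)
          ((hgc.intervalIntegrable (μ := volume) 0 ξ).1) ?_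
        refine ae_restrict_of_forall_mem measurableSet_Ioc ?_
        intro x hx
        show |∫ η₁ in ξ..η, q (η₁ - x) * v x η₁| ≤ _
        exact hA x hx.1.le hx.2
    -- Step C: compute the outer integral of the bound
    have hgint : (∫ ξ₁ in (0:ℝ)..ξ, c * ξ₁ ^ n / n.factorial / (n + 1).factorial * D)
        = (c / n.factorial / (n + 1).factorial * D) * (ξ ^ (n + 1) / ((n:ℝ) + 1)) := by
      have h1 : (∫ ξ₁ in (0:ℝ)..ξ, c * ξ₁ ^ n / n.factorial / (n + 1).factorial * D)
          = ∫ ξ₁ in (0:ℝ)..ξ, (c / n.factorial / (n + 1).factorial * D) * ξ₁ ^ n :=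
        intervalIntegral.integral_congr (fun x _ => by ring)
      rw [h1, intervalIntegral.integral_const_mul, integral_pow]
      simp
    -- Conclusion
    simp only [Kop]
    rw [abs_mul, abs_of_nonneg (by norm_num : (0:ℝ) ≤ 1/4)]
    refine le_trans (mul_le_mul_of_nonneg_left houter (by norm_num)) ?_
    rw [hgint, hc, hD]
    have hf1 : ((n.factorial : ℕ) : ℝ) ≠ 0 := Nat.cast_ne_zero.mpr n.factorial_ne_zero
    have hf2 : (((n + 1).factorial : ℕ) : ℝ) ≠ 0 := Nat.cast_ne_zero.mpr (n + 1).factorial_ne_zero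
    have hn1 : ((n:ℝ) + 1) ≠ 0 := by positivity
    have hn2 : ((n:ℝ) + 2) ≠ 0 := by positivity
    have h4 : ((4:ℝ) ^ (n + 1)) ≠ 0 := by positivity
    apply le_of_eq
    simp only [Nat.factorial_succ]
    push_cast
    field_simp
    ring
end

section
/- Suppose v : {(ξ,η) : 0 ≤ ξ ≤ η} → ℝ satisfies |v(ξ,η)| ≤ Σ_{n=0}^∞ (M^{n+1}/4^{n+1}) (ξ^n/n!)((η+n+1)^{n+1}/(n+1)!) for some M ≥ 0. Then for any κ > 0, |v(ξ,η)| ≤ (Mη/4) e^{ξMκ/2} e^{η/κ} + (Me/(4√(2π))) e^{ξ e M/2}. -/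
/-!
Split `(η + n + 1)^(n+1) ≤ 2^n (η^(n+1) + (n+1)^(n+1))` by convexity. In the `η`-part write
`η^n / n! = κ^n (η/κ)^n / n! ≤ κ^n e^{η/κ}`; in the other part Stirling's lower bound
`m! ≥ √(2πm) (m/e)^m` gives `(n+1)^(n+1) / (n+1)! ≤ e^(n+1) / √(2π)`. Each term of the
series is then dominated by a combination of the exponential series at `ξMκ/2` and `ξeM/2`.
-/

open Real Nat

namespace Real

lemma hasSum_pow_div_factorial (x : ℝ) : HasSum (fun n ↦ x ^ n / n !) (exp x) := by
  rw [exp_eq_exp_ℝ]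
  exact NormedSpace.expSeries_div_hasSum_exp x

lemma pow_self_div_factorial_le {m : ℕ} (hm : m ≠ 0) :
    (m : ℝ) ^ m / m ! ≤ exp 1 ^ m / √(2 * π) := by
  have hstirling := Stirling.le_factorial_stirling m
  have hm_one : (1 : ℝ) ≤ m := by exact_mod_cast one_le_iff_ne_zero.2 hm
  have hsqrt : √(2 * π) ≤ √(2 * π * m) :=
    sqrt_le_sqrt (le_mul_of_one_le_right (by positivity) hm_one)
  rw [div_pow, mul_div_assoc', div_le_iff₀ (by positivity)] at hstirling
  rw [div_le_div_iff₀ (by positivity) (by positivity)]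
  calc (m : ℝ) ^ m * √(2 * π) ≤ (m : ℝ) ^ m * √(2 * π * m) := by gcongr
    _ ≤ exp 1 ^ m * m ! := by linarith

lemma pow_succ_div_factorial_succ_le {η κ : ℝ} (hη : 0 ≤ η) (hκ : 0 < κ) (n : ℕ) :
    η ^ (n + 1) / (n + 1)! ≤ η * κ ^ n * exp (η / κ) :=
  calc η ^ (n + 1) / (n + 1)! ≤ η ^ (n + 1) / n ! := by
        gcongr
        exact n.le_succ
    _ = η * κ ^ n * ((η / κ) ^ n / n !) := by
        rw [div_pow]
        field_simp
        ring
    _ ≤ η * κ ^ n * exp (η / κ) := by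
        gcongr
        exact pow_div_factorial_le_exp _ (by positivity) n

end Real

lemma goursat_term_le {M ξ η κ : ℝ} (hM : 0 ≤ M) (hξ : 0 ≤ ξ) (hη : 0 ≤ η)
    (hκ : 0 < κ) (n : ℕ) :
    M ^ (n + 1) / 4 ^ (n + 1) * (ξ ^ n / n !) * ((η + n + 1) ^ (n + 1) / (n + 1)!) ≤
      M * η / 4 * exp (η / κ) * ((ξ * M * κ / 2) ^ n / n !) +
        M * exp 1 / (4 * √(2 * π)) * ((ξ * exp 1 * M / 2) ^ n / n !) := by
  have hconvex := add_pow_le hη (by positivity : (0 : ℝ) ≤ n + 1) (n + 1)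
  rw [Nat.add_sub_cancel] at hconvex
  have hstirling := pow_self_div_factorial_le (m := n + 1) n.succ_ne_zero
  push_cast at hstirling
  have hpow := pow_succ_div_factorial_succ_le hη hκ n
  have hfour : (4 : ℝ) ^ (n + 1) = 4 * 2 ^ n * 2 ^ n := by
    rw [pow_succ, mul_assoc, ← mul_pow]
    norm_num
    ring
  calc M ^ (n + 1) / 4 ^ (n + 1) * (ξ ^ n / n !) * ((η + n + 1) ^ (n + 1) / (n + 1)!)
      = M / 4 * ((ξ * M / 2) ^ n / n !) *
          ((η + (n + 1)) ^ (n + 1) / (2 ^ n * (n + 1)!)) := by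
        rw [hfour, div_pow]
        field_simp
        ring
    _ ≤ M / 4 * ((ξ * M / 2) ^ n / n !) *
          (η ^ (n + 1) / (n + 1)! + ((n : ℝ) + 1) ^ (n + 1) / (n + 1)!) := by
        gcongr
        rw [← add_div, div_le_div_iff₀ (by positivity) (by positivity), ← mul_assoc]
        gcongr
        linarith
    _ ≤ M / 4 * ((ξ * M / 2) ^ n / n !) *
          (η * κ ^ n * exp (η / κ) + exp 1 ^ (n + 1) / √(2 * π)) := by gcongr
    _ = _ := by
        simp only [mul_pow, div_pow, pow_succ]
        ring

theorem goursat_kernel_estimate (M : ℝ) (hM : 0 ≤ M) (v : ℝ → ℝ → ℝ)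
    (hv : ∀ ξ η : ℝ, 0 ≤ ξ → ξ ≤ η →
      |v ξ η| ≤ ∑' n : ℕ, M ^ (n + 1) / 4 ^ (n + 1) * (ξ ^ n / n.factorial) *
        ((η + n + 1) ^ (n + 1) / (n + 1).factorial)) :
    ∀ κ : ℝ, 0 < κ → ∀ ξ η : ℝ, 0 ≤ ξ → ξ ≤ η →
      |v ξ η| ≤ M * η / 4 * Real.exp (ξ * M * κ / 2) * Real.exp (η / κ) +
        M * Real.exp 1 / (4 * Real.sqrt (2 * Real.pi)) *
          Real.exp (ξ * Real.exp 1 * M / 2) := by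
  intro κ hκ ξ η hξ hξη
  have hη : 0 ≤ η := hξ.trans hξη
  have hbound := goursat_term_le hM hξ hη hκ
  have hmajorant :=
    ((hasSum_pow_div_factorial (ξ * M * κ / 2)).mul_left (M * η / 4 * exp (η / κ))).add
      ((hasSum_pow_div_factorial (ξ * exp 1 * M / 2)).mul_left (M * exp 1 / (4 * √(2 * π))))
  have hsummable := hmajorant.summable.of_nonneg_of_le (fun n ↦ by positivity) hbound
  calc |v ξ η| ≤ _ := hv ξ η hξ hξη
    _ ≤ _ := hasSum_le hbound hsummable.hasSum hmajorant
    _ = _ := by ring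
end
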